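/- arXiv:2601.20128 — 3 statements merged into one kernel-verified Lean document; each statement's English description precedes it below -/
import Mathlib

section
/- If X : ℝ → ℝ is differentiable with 0 < X(t) < K for all t in an interval, and X satisfies dX/dt = r·X·(ln K − ln X)·(ln X − ln a(t)), then the function W(t) = 1/(ln K − ln X(t)) satisfies the linear ODE dW/dt = r·(−1 + ln(K/a(t))·W(t)) on that interval. -/
open Real

lemma hasDerivAt_one_div_sub_log {X : ℝ → ℝ} {X' c t : ℝ} (hX : HasDerivAt X X' t)
    (hX0 : X t ≠ 0) (hc : c - log (X t) ≠ 0) :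
    HasDerivAt (fun s => 1 / (c - log (X s))) (X' / (X t * (c - log (X t)) ^ 2)) t := by
  have hlog : HasDerivAt (fun s => c - log (X s)) (-(X' / X t)) t := by
    simpa using (hX.log hX0).const_sub c
  simp only [one_div]
  exact (hlog.inv hc).congr_deriv (by field_simp)

theorem stmt2_general (r K : ℝ)
    (a : ℝ → ℝ) (haK : ∀ t, 0 < a t ∧ a t < K)
    (I : Set ℝ)
    (X : ℝ → ℝ) (hX : ∀ t ∈ I, 0 < X t ∧ X t < K)
    (hXd : ∀ t ∈ I, HasDerivAt X
      (r * X t * (Real.log K - Real.log (X t)) * (Real.log (X t) - Real.log (a t))) t) :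
    ∀ t ∈ I, HasDerivAt (fun s => 1 / (Real.log K - Real.log (X s)))
      (r * (-1 + Real.log (K / a t) * (1 / (Real.log K - Real.log (X t))))) t := by
  intro t ht
  obtain ⟨hX0, hXK⟩ := hX t ht
  have ha0 : 0 < a t := (haK t).1
  have hgap : log K - log (X t) ≠ 0 := (sub_pos.mpr (log_lt_log hX0 hXK)).ne'
  convert hasDerivAt_one_div_sub_log (hXd t ht) hX0.ne' hgap using 1
  rw [log_div (hX0.trans hXK).ne' ha0.ne']
  field_simp
  ring

/-- If X solves the ODE and stays in (0,K) on an open interval, then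
W(t) = 1/(ln K − ln X(t)) satisfies W' = r·(−1 + ln(K/a(t))·W(t)) there. -/
theorem stmt2 (r K : ℝ) (hr : 0 < r) (hK : 0 < K)
    (a : ℝ → ℝ) (ha : Continuous a) (haK : ∀ t, 0 < a t ∧ a t < K)
    (I : Set ℝ) (hI : IsOpen I) (hI' : I.OrdConnected)
    (X : ℝ → ℝ) (hX : ∀ t ∈ I, 0 < X t ∧ X t < K)
    (hXd : ∀ t ∈ I, HasDerivAt X
      (r * X t * (Real.log K - Real.log (X t)) * (Real.log (X t) - Real.log (a t))) t) :
    ∀ t ∈ I, HasDerivAt (fun s => 1 / (Real.log K - Real.log (X s)))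
      (r * (-1 + Real.log (K / a t) * (1 / (Real.log K - Real.log (X t))))) t :=
  stmt2_general r K a haK I X hX hXd
end

section
/- For X₀ ∈ (0, K) and constant Allee parameter a with 0 < a < K, the function X(t) = K·exp(−e^{−r·ln(K/a)·t}·{(ln K − ln X₀)^{-1} − (ln K − ln a)^{-1}·(1 − e^{−r·(ln K − ln a)·t})}^{-1}) satisfies X(0) = X₀ and solves the ODE X'(t) = r·X(t)·(ln K − ln X(t))·(ln X(t) − ln a) on the interval [0, τ) where the denominator expression (ln K − ln X₀)^{-1} − (ln K − ln a)^{-1}·(1 − e^{−r·(ln K − ln a)·t}) remains positive. -/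
/-! With `b = ln K − ln a`, the quantity `u = ln K − ln X` turns the ODE into the Bernoulli
equation `u' = −r u (b − u)`. Its reciprocal solves the linear equation `v' = r b v − r`, whose
solution with `v 0 = (ln K − ln X₀)⁻¹` is `v t = e^{r b t} D t`; hence `u = e^{−r b t} / D t`. -/

open Real

theorem hasDerivAt_exp_div_bernoulli {r b c t : ℝ} (hb : b ≠ 0)
    (hD : c - b⁻¹ * (1 - exp (-(r * b) * t)) ≠ 0) :
    HasDerivAt (fun s => exp (-(r * b) * s) / (c - b⁻¹ * (1 - exp (-(r * b) * s))))
      (-(r * (exp (-(r * b) * t) / (c - b⁻¹ * (1 - exp (-(r * b) * t)))) *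
        (b - exp (-(r * b) * t) / (c - b⁻¹ * (1 - exp (-(r * b) * t)))))) t := by
  have hE : HasDerivAt (fun s => exp (-(r * b) * s)) (exp (-(r * b) * t) * -(r * b)) t := by
    simpa using ((hasDerivAt_id t).const_mul (-(r * b))).exp
  have hDen : HasDerivAt (fun s => c - b⁻¹ * (1 - exp (-(r * b) * s)))
      (-(r * exp (-(r * b) * t))) t :=
    ((hasDerivAt_const t c).sub (((hasDerivAt_const t 1).sub hE).const_mul b⁻¹)).congr_deriv
      (by field_simp; ring)
  refine (hE.fun_div hDen hD).congr_deriv ?_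
  generalize c - b⁻¹ * (1 - exp (-(r * b) * t)) = d at hD ⊢
  field_simp
  ring

theorem log_sub_log_mul_exp_neg {K : ℝ} (hK : 0 < K) (u : ℝ) :
    log K - log (K * exp (-u)) = u := by
  rw [log_mul hK.ne' (exp_ne_zero _), log_exp]
  ring

theorem mul_exp_neg_log_sub_log {K x : ℝ} (hK : 0 < K) (hx : 0 < x) :
    K * exp (-(log K - log x)) = x := by
  rw [neg_sub, exp_sub, exp_log hx, exp_log hK]
  field_simp

theorem hasDerivAt_mul_exp_neg_of_bernoulli {u : ℝ → ℝ} {r b K t : ℝ} (hK : 0 < K)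
    (hu : HasDerivAt u (-(r * u t * (b - u t))) t) :
    HasDerivAt (fun s => K * exp (-u s))
      (r * (K * exp (-u t)) * (log K - log (K * exp (-u t))) *
        (log (K * exp (-u t)) - (log K - b))) t := by
  refine (hu.neg.exp.const_mul K).congr_deriv ?_
  rw [log_sub_log_mul_exp_neg hK, log_mul hK.ne' (exp_ne_zero _), log_exp, Pi.neg_apply]
  ring

theorem stmt6_general (r a K X₀ : ℝ) (ha : 0 < a) (haK : a < K)
    (hX₀ : X₀ ∈ Set.Ioo 0 K)
    (D X : ℝ → ℝ)
    (hD : ∀ t, D t = (Real.log K - Real.log X₀)⁻¹ -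
      (Real.log K - Real.log a)⁻¹ * (1 - Real.exp (-(r * (Real.log K - Real.log a)) * t)))
    (hX : ∀ t, X t = K * Real.exp (-(Real.exp (-(r * (Real.log K - Real.log a)) * t) / D t))) :
    X 0 = X₀ ∧
    ∀ t, 0 ≤ t → 0 < D t →
      HasDerivAt X (r * X t * (Real.log K - Real.log (X t)) * (Real.log (X t) - Real.log a)) t := by
  obtain ⟨hX₀pos, hX₀K⟩ := hX₀
  have hK : 0 < K := ha.trans haK
  have hb : log K - log a ≠ 0 := (sub_pos.2 (log_lt_log ha haK)).ne'
  have hc : log K - log X₀ ≠ 0 := (sub_pos.2 (log_lt_log hX₀pos hX₀K)).ne'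
  have hXD : X = fun s => K * exp (-(exp (-(r * (log K - log a)) * s) / D s)) := funext hX
  refine ⟨?_, fun t _ hDt => ?_⟩
  · rw [hX, hD]
    simpa [hc] using mul_exp_neg_log_sub_log hK hX₀pos
  · have hu := hasDerivAt_exp_div_bernoulli (r := r) (c := (log K - log X₀)⁻¹) (t := t) hb
      (by rw [← hD]; exact hDt.ne')
    simp only [← hD] at hu
    have hX' := hasDerivAt_mul_exp_neg_of_bernoulli hK hu
    rwa [sub_sub_cancel, ← hXD, ← hX] at hX'

/-- For constant Allee parameter a, the explicit function
X(t) = K·exp(−e^{−r(ln K − ln a)t}/D(t)) with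
D(t) = (ln K − ln X₀)⁻¹ − (ln K − ln a)⁻¹·(1 − e^{−r(ln K − ln a)t})
satisfies X(0) = X₀ and solves the ODE wherever D stays positive (t ≥ 0). -/
theorem stmt6 (r a K X₀ : ℝ) (hr : 0 < r) (ha : 0 < a) (haK : a < K)
    (hX₀ : X₀ ∈ Set.Ioo 0 K)
    (D X : ℝ → ℝ)
    (hD : ∀ t, D t = (Real.log K - Real.log X₀)⁻¹ -
      (Real.log K - Real.log a)⁻¹ * (1 - Real.exp (-(r * (Real.log K - Real.log a)) * t)))
    (hX : ∀ t, X t = K * Real.exp (-(Real.exp (-(r * (Real.log K - Real.log a)) * t) / D t))) :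
    X 0 = X₀ ∧
    ∀ t, 0 ≤ t → 0 < D t →
      HasDerivAt X (r * X t * (Real.log K - Real.log (X t)) * (Real.log (X t) - Real.log a)) t :=
  stmt6_general r a K X₀ ha haK hX₀ D X hD hX
end

section
/- For constant a with a < X₀ < K, the explicit solution X(t) = K·exp(−e^{−r(ln K − ln a)t}·{(ln K − ln X₀)^{-1} − (ln K − ln a)^{-1}(1 − e^{−r(ln K − ln a)t})}^{-1}) converges to K as t → +∞. -/
/-! As t → ∞ the numerator e^{-ct} of the exponent tends to 0, while its denominator tends to
(ln K − ln X₀)⁻¹ − (ln K − ln a)⁻¹, which is nonzero because a < X₀; so the exponent tends to 0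
and X(t) → K · e⁰ = K. -/

open Filter Topology

lemma tendsto_exp_neg_mul_atTop_nhds_zero {c : ℝ} (hc : 0 < c) :
    Tendsto (fun t => Real.exp (-c * t)) atTop (𝓝 0) :=
  Real.tendsto_exp_comp_nhds_zero.2 (tendsto_id.const_mul_atTop_of_neg (neg_neg_of_pos hc))

lemma tendsto_div_sub_mul_one_sub_nhds_zero {α : Type*} {l : Filter α} {f : α → ℝ}
    (hf : Tendsto f l (𝓝 0)) {A B : ℝ} (hAB : A ≠ B) :
    Tendsto (fun t => f t / (A - B * (1 - f t))) l (𝓝 0) := by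
  have hden : Tendsto (fun t => A - B * (1 - f t)) l (𝓝 (A - B * (1 - 0))) :=
    tendsto_const_nhds.sub (tendsto_const_nhds.mul (tendsto_const_nhds.sub hf))
  rw [sub_zero, mul_one] at hden
  have hquot := hf.div hden (sub_ne_zero.2 hAB)
  rwa [zero_div] at hquot

/-- For 0 < a < X₀ < K, the explicit solution converges to K as t → ∞. -/
theorem stmt13 (r a K X₀ : ℝ) (hr : 0 < r) (ha : 0 < a) (haX₀ : a < X₀) (hX₀K : X₀ < K)
    (X : ℝ → ℝ)
    (hX : ∀ t, X t = K * Real.exp (-(Real.exp (-(r * (Real.log K - Real.log a)) * t) /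
      ((Real.log K - Real.log X₀)⁻¹ -
        (Real.log K - Real.log a)⁻¹ * (1 - Real.exp (-(r * (Real.log K - Real.log a)) * t)))))) :
    Tendsto X atTop (nhds K) := by
  have hlogX₀ : Real.log X₀ < Real.log K := Real.log_lt_log (ha.trans haX₀) hX₀K
  have hlog_a : Real.log a < Real.log X₀ := Real.log_lt_log ha haX₀
  have hrate : 0 < r * (Real.log K - Real.log a) := mul_pos hr (by linarith)
  have hinv : (Real.log K - Real.log X₀)⁻¹ ≠ (Real.log K - Real.log a)⁻¹ :=
    (inv_strictAnti₀ (by linarith) (by linarith)).ne'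
  have hexponent := (tendsto_div_sub_mul_one_sub_nhds_zero
    (tendsto_exp_neg_mul_atTop_nhds_zero hrate) hinv).neg
  rw [neg_zero] at hexponent
  have hlim := tendsto_const_nhds (x := K) |>.mul (Real.continuous_exp.tendsto 0 |>.comp hexponent)
  rw [Real.exp_zero, mul_one] at hlim
  exact hlim.congr fun t => (hX t).symm
end
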